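/- Let Γ be a ℤ^d-periodic graph with fundamental domain W = [n]. Let w ∈ ℤ^{d+1}, w ≠ 0, be such that the face N_w identified by w is a proper face of the generic Newton polytope N = N(D(z,λ)), and let m = min_{a ∈ A(D(z,λ))} w·a. Then for any fixed labeling (v,e) and any permutation σ of [n], σD(z,λ) contains no term of weight less than m with respect to w; that is, every exponent vector a in the support of σD(z,λ) satisfies w·a ≥ m. -/

import Mathlib

open scoped Classical Polynomial

noncomputable section

/-- A `ℤ^d`-periodic graph (with no self-loops or multiple edges), given by a
fundamental domain `[n] = Fin n` together with, for each pair `i j` of vertices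
of the fundamental domain, the finite set `edges i j ⊆ ℤ^d` of those `a` such
that there is an edge between the vertex `(i,0)` and the vertex `(j,a)`.
The full vertex set is `Fin n × ℤ^d`, with `ℤ^d` acting by translation on the
second coordinate. -/
structure PeriodicGraph (d n : ℕ) where
  edges : Fin n → Fin n → Finset (Fin d → ℤ)
  symm : ∀ i j a, a ∈ edges i j ↔ -a ∈ edges j i
  no_loop : ∀ i, (0 : Fin d → ℤ) ∉ edges i i

namespace PeriodicGraph

variable {d n : ℕ}

/-- Vertices of the periodic graph: pairs `(i, a)` with `i` in the fundamental
domain and `a ∈ ℤ^d`. -/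
abbrev Vertex (d n : ℕ) := Fin n × (Fin d → ℤ)

/-- Adjacency in the full `ℤ^d`-periodic graph. -/
def Adj (G : PeriodicGraph d n) (u v : Vertex d n) : Prop :=
  (v.2 - u.2) ∈ G.edges u.1 v.1

/-- The periodic graph is connected. -/
def Connected (G : PeriodicGraph d n) : Prop :=
  ∀ u v : Vertex d n, Relation.ReflTransGen G.Adj u v

/-- Directed edges (up to translation): triples `(i, j, a)` so that there is an
edge from `(i,0)` to `(j,a)`. -/
def DirEdge (G : PeriodicGraph d n) : Type :=
  {x : Fin n × Fin n × (Fin d → ℤ) // x.2.2 ∈ G.edges x.1 x.2.1}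

/-- Reversal of a directed edge. -/
def flipEdge (G : PeriodicGraph d n) (x : G.DirEdge) : G.DirEdge :=
  ⟨(x.1.2.1, x.1.1, -x.1.2.2), (G.symm _ _ _).mp x.2⟩

lemma flipEdge_flipEdge (G : PeriodicGraph d n) (x : G.DirEdge) :
    G.flipEdge (G.flipEdge x) = x := by
  obtain ⟨⟨i, j, a⟩, hx⟩ := x
  simp [flipEdge] <;> rfl

/-- The setoid identifying a directed edge with its reversal; an (undirected)
edge label variable `e_{(i,j),a} = e_{(j,i),-a}` corresponds to an equivalence
class. -/
def edgeSetoid (G : PeriodicGraph d n) : Setoid G.DirEdge where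
  r x y := y = x ∨ y = G.flipEdge x
  iseqv := by
    constructor
    · intro x; exact Or.inl rfl
    · rintro x y (rfl | rfl)
      · exact Or.inl rfl
      · right; rw [flipEdge_flipEdge]
    · rintro x y z (rfl | rfl) h
      · exact h
      · rcases h with rfl | rfl
        · exact Or.inr rfl
        · left; rw [flipEdge_flipEdge]

/-- Edge-label variables: unordered edges of the quotient graph. -/
abbrev EdgeVar (G : PeriodicGraph d n) : Type := Quotient G.edgeSetoid

/-- The index type for the variables of the labeling space `ℂ^{V,E}`:
one potential variable `v_i` for each vertex `i` of the fundamental domain,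
and one edge-label variable for each (undirected) edge of the quotient. -/
abbrev VarIdx (G : PeriodicGraph d n) : Type := Fin n ⊕ G.EdgeVar

/-- The labeling space `ℂ^{V,E}`. -/
abbrev Labeling (G : PeriodicGraph d n) : Type := G.VarIdx → ℂ

/-- The edge variable attached to a directed edge. -/
def edgeVar (G : PeriodicGraph d n) (i j : Fin n) (a : Fin d → ℤ)
    (h : a ∈ G.edges i j) : G.VarIdx :=
  Sum.inr (Quotient.mk G.edgeSetoid ⟨(i, j, a), h⟩)

/-- The ring `ℂ[z^{±1}]` of complex Laurent polynomials in `z = (z_1,…,z_d)`. -/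
abbrev LaurentC (d : ℕ) : Type := AddMonoidAlgebra ℂ (Fin d → ℤ)

/-- The universal coefficient ring `ℂ[v,e]`: polynomials in the potential and
edge-label variables. -/
abbrev CoeffRing (G : PeriodicGraph d n) : Type := MvPolynomial G.VarIdx ℂ

/-- Laurent polynomials in `z` with coefficients in `ℂ[v,e]`. -/
abbrev LaurentU (G : PeriodicGraph d n) : Type :=
  AddMonoidAlgebra G.CoeffRing (Fin d → ℤ)

/-- The Floquet matrix `L(z)` at a fixed labeling `x ∈ ℂ^{V,E}`:
`L(z)_{i,j} = δ_{ij} v_i + ∑_{a : (i,j+a) ∈ ℰ} e_{(i,j),a} z^a`. -/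
def floquet (G : PeriodicGraph d n) (x : G.Labeling) :
    Matrix (Fin n) (Fin n) (LaurentC d) := fun i j =>
  (if i = j then AddMonoidAlgebra.single 0 (x (Sum.inl i)) else 0) +
    ∑ a ∈ (G.edges i j).attach,
      AddMonoidAlgebra.single a.1 (x (G.edgeVar i j a.1 a.2))

/-- The universal Floquet matrix `L(z)`, with the potentials and edge labels
treated as indeterminates. -/
def floquetU (G : PeriodicGraph d n) :
    Matrix (Fin n) (Fin n) G.LaurentU := fun i j =>
  (if i = j then AddMonoidAlgebra.single 0 (MvPolynomial.X (Sum.inl i)) else 0) +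
    ∑ a ∈ (G.edges i j).attach,
      AddMonoidAlgebra.single a.1 (MvPolynomial.X (G.edgeVar i j a.1 a.2))

/-- The matrix `L(z) - λ I` at a fixed labeling, as a matrix of polynomials in
`λ` over `ℂ[z^{±1}]`. -/
def dispMat (G : PeriodicGraph d n) (x : G.Labeling) :
    Matrix (Fin n) (Fin n) (Polynomial (LaurentC d)) := fun i j =>
  Polynomial.C (G.floquet x i j) - if i = j then Polynomial.X else 0

/-- The universal matrix `L(z) - λ I`. -/
def dispMatU (G : PeriodicGraph d n) :
    Matrix (Fin n) (Fin n) (Polynomial G.LaurentU) := fun i j =>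
  Polynomial.C (G.floquetU i j) - if i = j then Polynomial.X else 0

/-- The dispersion polynomial `D(z,λ) = det (L(z) - λ I)` at a fixed
labeling, an element of `ℂ[z^{±1}][λ]`. -/
def disp (G : PeriodicGraph d n) (x : G.Labeling) : Polynomial (LaurentC d) :=
  (G.dispMat x).det

/-- The universal dispersion polynomial `D(v,e,z,λ) = det (L(z) - λ I)`,
an element of `ℂ[v,e][z^{±1}][λ]`. -/
def dispU (G : PeriodicGraph d n) : Polynomial G.LaurentU :=
  G.dispMatU.det

/-- `σD(z,λ) = ∏ i, (L(z) - λI)_{i, σ(i)}` at a fixed labeling. -/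
def permProd (G : PeriodicGraph d n) (x : G.Labeling) (σ : Equiv.Perm (Fin n)) :
    Polynomial (LaurentC d) :=
  ∏ i, G.dispMat x i (σ i)

/-- The universal `σD(v,e,z,λ) = ∏ i, (L(z) - λI)_{i, σ(i)}`. -/
def permProdU (G : PeriodicGraph d n) (σ : Equiv.Perm (Fin n)) :
    Polynomial G.LaurentU :=
  ∏ i, G.dispMatU i (σ i)

/-- The support `𝒜(g) ⊆ ℤ^d × ℕ` of `g ∈ ℂ[z^{±1}][λ]`: the set of pairs
`(a, b)` such that the monomial `z^a λ^b` has nonzero coefficient. -/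
def suppC (g : Polynomial (LaurentC d)) : Set ((Fin d → ℤ) × ℕ) :=
  {p | AddMonoidAlgebra.coeff (g.coeff p.2) p.1 ≠ 0}

/-- The generic support `A(f) ⊆ ℤ^d × ℕ` of `f ∈ ℂ[v,e][z^{±1}][λ]`: the set
of `(a,b)` such that the coefficient `c_{a,b}(v,e)` of `z^a λ^b` is a nonzero
polynomial in `(v,e)` (equivalently, such that `(a,b)` is in the support of the
specialization of `f` at a generic labeling). -/
def genSupp {G : PeriodicGraph d n} (f : Polynomial G.LaurentU) :
    Set ((Fin d → ℤ) × ℕ) :=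
  {p | AddMonoidAlgebra.coeff (f.coeff p.2) p.1 ≠ 0}

/-- The full support `𝒜(f) ⊆ ℤ^d × ℕ × ℕ^{V,E}` of `f ∈ ℂ[v,e][z^{±1}][λ]`
as a polynomial in all the variables `z, λ, v, e`: the set of triples
`(r₁, r₂, r₃)` such that the monomial `z^{r₁} λ^{r₂} (v,e)^{r₃}` appears in `f`
with nonzero coefficient. -/
def fullSupp {G : PeriodicGraph d n} (f : Polynomial G.LaurentU) :
    Set ((Fin d → ℤ) × ℕ × (G.VarIdx →₀ ℕ)) :=
  {r | MvPolynomial.coeff r.2.2 (AddMonoidAlgebra.coeff (f.coeff r.2.1) r.1) ≠ 0}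

/-- The embedding `ℤ^d × ℕ → ℝ^{d+1}` of exponent vectors. -/
def toPt (p : (Fin d → ℤ) × ℕ) : (Fin d → ℝ) × ℝ :=
  (fun i => (p.1 i : ℝ), (p.2 : ℝ))

/-- The generic Newton polytope `N(f) ⊆ ℝ^{d+1}` of `f ∈ ℂ[v,e][z^{±1}][λ]`:
the convex hull of the generic support. -/
def newton {G : PeriodicGraph d n} (f : Polynomial G.LaurentU) :
    Set ((Fin d → ℝ) × ℝ) :=
  convexHull ℝ (toPt '' genSupp f)

/-- The pairing `w · p` of a weight `w ∈ ℤ^{d+1}` with an exponent vector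
`p ∈ ℤ^d × ℕ`. -/
def dotZ (w : (Fin d → ℤ) × ℤ) (p : (Fin d → ℤ) × ℕ) : ℤ :=
  (∑ i, w.1 i * p.1 i) + w.2 * (p.2 : ℤ)

/-- The pairing `w · q` of a weight `w ∈ ℤ^{d+1}` with a point `q ∈ ℝ^{d+1}`. -/
def dotR (w : (Fin d → ℤ) × ℤ) (q : (Fin d → ℝ) × ℝ) : ℝ :=
  (∑ i, (w.1 i : ℝ) * q.1 i) + (w.2 : ℝ) * q.2

/-- The face `N(f)_w` of the generic Newton polytope identified by the weight
`w`: the set of points of `N(f)` on which `w · ·` is minimized. -/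
def face {G : PeriodicGraph d n} (f : Polynomial G.LaurentU)
    (w : (Fin d → ℤ) × ℤ) : Set ((Fin d → ℝ) × ℝ) :=
  {q ∈ newton f | ∀ q' ∈ newton f, dotR w q ≤ dotR w q'}

/-- A set in `ℝ^{d+1}` is vertical if it contains two points `(a,b)` and
`(a,c)` with `b ≠ c`. -/
def IsVertical (F : Set ((Fin d → ℝ) × ℝ)) : Prop :=
  ∃ (a : Fin d → ℝ) (b c : ℝ), b ≠ c ∧ (a, b) ∈ F ∧ (a, c) ∈ F

/-- A set in `ℝ^{d+1}` is a vertical segment if it is a (one-dimensional)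
segment and is vertical. -/
def IsVerticalSegment (F : Set ((Fin d → ℝ) × ℝ)) : Prop :=
  (∃ p q : (Fin d → ℝ) × ℝ, p ≠ q ∧ F = segment ℝ p q) ∧ IsVertical F

/-- `U ⊆ [n]` is a component of the fundamental domain: no edge of `Γ` joins
the `ℤ^d`-orbit of `U` to the `ℤ^d`-orbit of its complement. -/
def IsComponent (G : PeriodicGraph d n) (U : Set (Fin n)) : Prop :=
  ∀ i ∈ U, ∀ j, j ∉ U → G.edges i j = ∅

/-- A fundamental domain of `Γ` is determined by shifts `t i ∈ ℤ^d` of the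
vertices of the standard fundamental domain (it is `{(i, t i) : i ∈ [n]}`).
`SupportZeroOn G t U` says that the subset `{(i, t i) : i ∈ U}` of that
fundamental domain has support `0`: every edge between the orbits of vertices
of `U` joins `(i, t i)` to `(j, t j)` with shift `a = 0`. -/
def SupportZeroOn (G : PeriodicGraph d n) (t : Fin n → (Fin d → ℤ))
    (U : Set (Fin n)) : Prop :=
  ∀ i ∈ U, ∀ j ∈ U, ∀ a ∈ G.edges i j, a = t j - t i

/-- `Γ` has a fundamental domain of support `0`. -/
def HasSupportZeroFD (G : PeriodicGraph d n) : Prop :=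
  ∃ t : Fin n → (Fin d → ℤ), G.SupportZeroOn t Set.univ

/-- `Γ` has a fundamental domain with a nonempty component of support `0`. -/
def HasSupportZeroComponent (G : PeriodicGraph d n) : Prop :=
  ∃ (t : Fin n → (Fin d → ℤ)) (U : Set (Fin n)),
    U.Nonempty ∧ G.IsComponent U ∧ G.SupportZeroOn t U

/-- A subset of the labeling space `ℂ^{V,E}` is algebraic if it is the common
zero locus of a family of polynomials in the variables `(v,e)`. -/
def IsAlgebraicSet {ι : Type*} (S : Set (ι → ℂ)) : Prop :=
  ∃ P : Set (MvPolynomial ι ℂ), S = {x | ∀ p ∈ P, MvPolynomial.eval x p = 0}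

/-- A property of labelings holds generically if it holds outside some proper
algebraic subset of the labeling space (i.e., on a nonempty Zariski-open set). -/
def Generic {ι : Type*} (P : (ι → ℂ) → Prop) : Prop :=
  ∃ S : Set (ι → ℂ), IsAlgebraicSet S ∧ S ≠ Set.univ ∧ ∀ x ∉ S, P x

/-- `g ∈ ℂ[z^{±1}][λ]` has a linear factor in `λ`. -/
def HasLinearFactor (g : Polynomial (LaurentC d)) : Prop :=
  ∃ lam : ℂ, (Polynomial.X - Polynomial.C (algebraMap ℂ (LaurentC d) lam)) ∣ g



/-- The dispersion polynomial `D|_U(z,λ) = det (L|_U(z) - λI)` of the induced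
periodic operator on the induced subgraph `Γ_U`, for `U ⊆ [n]`, at a fixed
labeling (the Floquet matrix of the induced operator is the corresponding
principal submatrix of `L(z)`). -/
def dispSub (G : PeriodicGraph d n) (x : G.Labeling) (U : Finset (Fin n)) :
    Polynomial (LaurentC d) :=
  (Matrix.det (fun i j : {i // i ∈ U} =>
    Polynomial.C (G.floquet x i.1 j.1) - if i = j then Polynomial.X else 0))

/-- Restriction of a Laurent polynomial to the monomials satisfying a
predicate. -/
def laurFilter (p : (Fin d → ℤ) → Prop) (g : LaurentC d) : LaurentC d :=
  AddMonoidAlgebra.ofCoeff (Finsupp.filter p (AddMonoidAlgebra.coeff g))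

/-- The facial polynomial `g_w` of `g ∈ ℂ[z^{±1}][λ]`: the sum of the terms of
`g` whose exponent vectors minimize `w · ·` over the support of `g`. -/
def facialC (w : (Fin d → ℤ) × ℤ) (g : Polynomial (LaurentC d)) :
    Polynomial (LaurentC d) :=
  ∑ b ∈ g.support,
    Polynomial.C (laurFilter
      (fun a => ∀ q ∈ suppC g, dotZ w (a, b) ≤ dotZ w q) (g.coeff b)) *
      Polynomial.X ^ b

/-- The monomial `z^a` in `ℂ[z^{±1}]`. -/
def zMon (a : Fin d → ℤ) : LaurentC d := AddMonoidAlgebra.single a 1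

/-- The Sylvester matrix of two polynomials `f, g ∈ R[λ]` (with respect to
their natural degrees `s = deg f` and `t = deg g`): a `(t+s) × (t+s)` matrix
whose first `t` rows are the shifted coefficient sequences of `f` and whose
last `s` rows are the shifted coefficient sequences of `g`. -/
def sylvester {R : Type*} [CommRing R] (f g : Polynomial R) :
    Matrix (Fin (g.natDegree + f.natDegree)) (Fin (g.natDegree + f.natDegree)) R :=
  fun r c =>
    if (r : ℕ) < g.natDegree then
      (if (r : ℕ) ≤ (c : ℕ) then f.coeff ((c : ℕ) - (r : ℕ)) else 0)
    else
      (if ((r : ℕ) - g.natDegree) ≤ (c : ℕ) then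
        g.coeff ((c : ℕ) - ((r : ℕ) - g.natDegree)) else 0)

/-- The resultant of two polynomials in `λ`: the determinant of their
Sylvester matrix. -/
def resultant {R : Type*} [CommRing R] (f g : Polynomial R) : R :=
  (sylvester f g).det

/-- The simplified quotient graph `S(Γ/ℤ^d)`: the finite simple graph on the
fundamental domain `[n]` with an edge between `i ≠ j` whenever some edge of `Γ`
joins the orbits of `i` and `j`. -/
def simpleQuotient (G : PeriodicGraph d n) : SimpleGraph (Fin n) where
  Adj i j := i ≠ j ∧ (G.edges i j).Nonempty
  symm := ⟨by
    rintro i j ⟨hij, a, ha⟩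
    exact ⟨hij.symm, ⟨-a, (G.symm i j a).mp ha⟩⟩⟩
  loopless := ⟨fun i h => h.1 rfl⟩

/-- A property of potentials `(v_1,…,v_n) ∈ ℂ^n` holds generically if it holds
outside a proper algebraic subset of `ℂ^n`. -/
def GenericPot (P : (Fin n → ℂ) → Prop) : Prop :=
  ∃ S : Set (Fin n → ℂ), IsAlgebraicSet S ∧ S ≠ Set.univ ∧ ∀ x ∉ S, P x

end PeriodicGraph

/-!
Expand `D = det (L(z) - λI) = ∑_σ sign σ · σD` and each entry of `L(z) - λI` into its terms.
A monomial `z^a λ^b (v,e)^μ` of the universal `σD` arises from choices of one term per row,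
each contributing `(-1)^b`. The edges whose variables occur in `μ` join every point moved by `σ`
to its image, and nothing else, so the cycles of `σ` are the connected components of the graph
they span: every permutation producing the monomial has the same cycles, hence the same sign. There is thus no cancellation in `D`, so
the support of the universal `σD` lies in the generic support of `D`, where every weight is at
least `m`; specialising the labeling only shrinks the support.
-/

namespace Equiv.Perm

variable {α : Type*}

theorem sameCycle_iff_eqvGen [Finite α] {σ : Perm α} {r : α → α → Prop}
    (hstep : ∀ u, σ u ≠ u → r u (σ u)) (hr : ∀ u v, r u v → σ u = v ∨ σ v = u)
    (u v : α) :
    σ.SameCycle u v ↔ Relation.EqvGen r u v := by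
  have hsucc : ∀ u, Relation.EqvGen r u (σ u) := fun u => by
    by_cases hu : σ u = u
    · rw [hu]; exact .refl u
    · exact .rel _ _ (hstep u hu)
  constructor
  · intro h
    obtain ⟨k, rfl⟩ := h.exists_nat_pow_eq
    clear h
    induction k with
    | zero => exact .refl u
    | succ k ih => rw [pow_succ', Perm.mul_apply]; exact ih.trans _ _ _ (hsucc _)
  · intro h
    induction h with
    | rel x y hxy =>
      rcases hr x y hxy with rfl | rfl
      · exact ⟨1, rfl⟩
      · exact (show σ.SameCycle y (σ y) from ⟨1, rfl⟩).symm
    | refl x => exact .refl σ x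
    | symm x y _ ih => exact ih.symm
    | trans x y z _ _ ih₁ ih₂ => exact ih₁.trans ih₂

variable [DecidableEq α] [Fintype α]

theorem mem_support_iff_exists_sameCycle {σ : Perm α} {x : α} :
    x ∈ σ.support ↔ ∃ y, y ≠ x ∧ σ.SameCycle x y := by
  refine ⟨fun hx => ⟨σ x, mem_support.mp hx, ⟨1, rfl⟩⟩, ?_⟩
  rintro ⟨y, hyx, hxy⟩
  exact mem_support.mpr fun hfix => hyx (hxy.eq_of_left hfix).symm

theorem cycleFactorsFinset_eq_image_cycleOf (σ : Perm α) :
    σ.cycleFactorsFinset = σ.support.image σ.cycleOf := by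
  ext c
  simp only [Finset.mem_image]
  constructor
  · intro hc
    obtain ⟨x, hx⟩ := (mem_cycleFactorsFinset_iff.mp hc).1.nonempty_support
    exact ⟨x, mem_cycleFactorsFinset_support_le hc hx, (cycle_is_cycleOf hx hc).symm⟩
  · rintro ⟨x, hx, rfl⟩
    exact cycleOf_mem_cycleFactorsFinset_iff.mpr hx

theorem sign_eq_prod_support_cycleOf (σ : Perm α) :
    sign σ = ∏ s ∈ σ.support.image fun x => (σ.cycleOf x).support, -(-1) ^ s.card := by
  have hinj : Set.InjOn support (σ.cycleFactorsFinset : Set (Perm α)) := by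
    intro c hc c' hc' h
    obtain ⟨x, hx⟩ := (mem_cycleFactorsFinset_iff.mp hc).1.nonempty_support
    rw [cycle_is_cycleOf hx hc, cycle_is_cycleOf (h ▸ hx) hc']
  have himage : σ.support.image (fun x => (σ.cycleOf x).support) =
      σ.cycleFactorsFinset.image support := by
    rw [cycleFactorsFinset_eq_image_cycleOf, Finset.image_image]; rfl
  rw [sign_of_cycleType', cycleType_def, Multiset.map_map, himage, Finset.prod_image hinj]
  rfl

theorem sign_eq_of_sameCycle_iff {σ τ : Perm α}
    (h : ∀ x y, σ.SameCycle x y ↔ τ.SameCycle x y) :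
    sign σ = sign τ := by
  have hsupp : σ.support = τ.support := by
    ext x; simp only [mem_support_iff_exists_sameCycle, h]
  have hcycle : ∀ x, (σ.cycleOf x).support = (τ.cycleOf x).support := by
    intro x; ext y; rw [mem_support_cycleOf_iff, mem_support_cycleOf_iff, h, hsupp]
  simp only [sign_eq_prod_support_cycleOf, hsupp, hcycle]

end Equiv.Perm

namespace PeriodicGraph

variable {d n : ℕ} (G : PeriodicGraph d n)

lemma eq_and_eq_or_of_edgeVar_eq {i j u v : Fin n} {a b : Fin d → ℤ} {ha : a ∈ G.edges i j}
    {hb : b ∈ G.edges u v} (h : G.edgeVar i j a ha = G.edgeVar u v b hb) :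
    (u = i ∧ v = j) ∨ (u = j ∧ v = i) := by
  rcases Quotient.exact (Sum.inr_injective h) with h' | h'
  · exact .inl ⟨congrArg (·.1.1) h', congrArg (·.1.2.1) h'⟩
  · exact .inr ⟨congrArg (·.1.1) h', congrArg (·.1.2.1) h'⟩

/-- `(a, b, μ)` stands for the monomial `z^a λ^b (v,e)^μ`. -/
abbrev Exponent : Type := (Fin d → ℤ) × ℕ × (G.VarIdx →₀ ℕ)

def coeffHom (r : G.Exponent) : Polynomial G.LaurentU →+ ℂ where
  toFun f := MvPolynomial.coeff r.2.2 ((f.coeff r.2.1).coeff r.1)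
  map_zero' := by simp
  map_add' f g := by simp [MvPolynomial.coeff_add]

lemma coeffHom_apply (r : G.Exponent) (f : Polynomial G.LaurentU) :
    G.coeffHom r f = MvPolynomial.coeff r.2.2 ((f.coeff r.2.1).coeff r.1) := rfl

lemma mem_fullSupp_iff {f : Polynomial G.LaurentU} {r : G.Exponent} :
    r ∈ fullSupp f ↔ G.coeffHom r f ≠ 0 := Iff.rfl

lemma mem_genSupp_iff {f : Polynomial G.LaurentU} {p : (Fin d → ℤ) × ℕ} :
    p ∈ genSupp f ↔ ∃ μ, (p.1, p.2, μ) ∈ fullSupp f := MvPolynomial.ne_zero_iff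

/-- `(-1)^b z^a λ^b (v,e)^μ`: every term of `L(z) - λI` is of this form, `-λ` included. -/
def signedMonomial (r : G.Exponent) : Polynomial G.LaurentU :=
  Polynomial.monomial r.2.1
    (AddMonoidAlgebra.single r.1 (MvPolynomial.monomial r.2.2 ((-1) ^ r.2.1)))

lemma signedMonomial_zero : G.signedMonomial 0 = 1 := by
  simp [signedMonomial, ← AddMonoidAlgebra.one_def]

lemma signedMonomial_add (r s : G.Exponent) :
    G.signedMonomial (r + s) = G.signedMonomial r * G.signedMonomial s := by
  simp [signedMonomial, Polynomial.monomial_mul_monomial, AddMonoidAlgebra.single_mul_single,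
    MvPolynomial.monomial_mul, pow_add]

lemma prod_signedMonomial {ι : Type*} (s : Finset ι) (f : ι → G.Exponent) :
    ∏ i ∈ s, G.signedMonomial (f i) = G.signedMonomial (∑ i ∈ s, f i) := by
  induction s using Finset.cons_induction with
  | empty => simp [signedMonomial_zero]
  | cons a s ha ih => rw [Finset.prod_cons, Finset.sum_cons, ih, signedMonomial_add]

lemma coeffHom_signedMonomial (r s : G.Exponent) :
    G.coeffHom r (G.signedMonomial s) = if s = r then (-1) ^ r.2.1 else 0 := by
  obtain ⟨a, b, μ⟩ := r
  obtain ⟨a', b', μ'⟩ := s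
  by_cases hb : b' = b <;> by_cases ha : a' = a <;> by_cases hμ : μ' = μ <;>
    simp [coeffHom_apply, signedMonomial, Polynomial.coeff_monomial, hb, ha, hμ,
      MvPolynomial.coeff_monomial, AddMonoidAlgebra.coeff_single]

lemma signedMonomial_lambda : G.signedMonomial (0, 1, 0) = -Polynomial.X := by
  simp [signedMonomial, ← Polynomial.C_mul_X_eq_monomial, ← AddMonoidAlgebra.one_def]

lemma signedMonomial_var (a : Fin d → ℤ) (v : G.VarIdx) :
    G.signedMonomial (a, 0, .single v 1) =
      Polynomial.C (AddMonoidAlgebra.single a (MvPolynomial.X v)) := by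
  simp [signedMonomial, MvPolynomial.X]

lemma snd_snd_sum_apply {ι : Type*} (s : Finset ι) (p : ι → G.Exponent) (v : G.VarIdx) :
    (∑ i ∈ s, p i).2.2 v = ∑ i ∈ s, (p i).2.2 v := by
  simp [Prod.snd_sum, Finsupp.finsetSum_apply]

def terms (i j : Fin n) : Finset G.Exponent :=
  (if i = j then {(0, 1, 0), (0, 0, .single (.inl i) 1)} else ∅) ∪
    (G.edges i j).attach.image fun a => (a.1, 0, .single (G.edgeVar i j a.1 a.2) 1)

lemma dispMatU_eq_sum_terms (i j : Fin n) :
    G.dispMatU i j = ∑ t ∈ G.terms i j, G.signedMonomial t := by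
  set edgeTerm := fun a : {a // a ∈ G.edges i j} =>
    ((a.1, 0, .single (G.edgeVar i j a.1 a.2) 1) : G.Exponent)
  have hdisj : Disjoint
      (if i = j then ({(0, 1, 0), (0, 0, .single (.inl i) 1)} : Finset G.Exponent) else ∅)
      ((G.edges i j).attach.image edgeTerm) := by
    rw [Finset.disjoint_left]
    intro t ht ht'
    split_ifs at ht
    · obtain ⟨a, -, rfl⟩ := Finset.mem_image.mp ht'
      simp [edgeTerm, edgeVar, Finsupp.single_left_inj] at ht
    · simp at ht
  have hinj : Set.InjOn edgeTerm ↑(G.edges i j).attach :=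
    fun a _ b _ h => Subtype.ext (congrArg Prod.fst h)
  rw [terms, Finset.sum_union hdisj, Finset.sum_image hinj]
  simp only [edgeTerm, signedMonomial_var, dispMatU, floquetU, map_add, map_sum]
  split_ifs with h
  · subst h
    rw [Finset.sum_pair (by simp), signedMonomial_lambda, signedMonomial_var]
    ring
  · simp only [Finset.sum_empty, map_zero]
    ring

lemma exists_eq_of_mem_terms {i j : Fin n} {t : G.Exponent} (ht : t ∈ G.terms i j)
    (hij : i ≠ j) : ∃ a ha, t = (a, 0, .single (G.edgeVar i j a ha) 1) := by
  simp only [terms, if_neg hij, Finset.empty_union, Finset.mem_image] at ht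
  obtain ⟨a, -, rfl⟩ := ht
  exact ⟨a.1, a.2, rfl⟩

lemma eq_and_eq_or_of_mem_terms {i j u v : Fin n} {t : G.Exponent} (ht : t ∈ G.terms i j)
    {a : Fin d → ℤ} {ha : a ∈ G.edges u v} (h : t.2.2 (G.edgeVar u v a ha) ≠ 0) :
    (u = i ∧ v = j) ∨ (u = j ∧ v = i) := by
  rcases Finset.mem_union.mp ht with ht | ht
  · split_ifs at ht
    · simp only [Finset.mem_insert, Finset.mem_singleton] at ht
      rcases ht with rfl | rfl <;> simp [edgeVar] at h
    · simp at ht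
  · obtain ⟨b, -, rfl⟩ := Finset.mem_image.mp ht
    rw [Finsupp.single_apply] at h
    by_cases hb : G.edgeVar i j b.1 b.2 = G.edgeVar u v a ha
    · exact G.eq_and_eq_or_of_edgeVar_eq hb
    · simp [hb] at h

/-- The ways of obtaining the monomial `r` by choosing one term in each factor of `σD`. -/
def realizers (σ : Equiv.Perm (Fin n)) (r : G.Exponent) : Finset (Fin n → G.Exponent) :=
  {p ∈ Fintype.piFinset fun i => G.terms i (σ i) | ∑ i, p i = r}

lemma coeffHom_permProdU (σ : Equiv.Perm (Fin n)) (r : G.Exponent) :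
    G.coeffHom r (G.permProdU σ) = (-1) ^ r.2.1 * (G.realizers σ r).card := by
  have hexpand : G.permProdU σ = ∑ p ∈ Fintype.piFinset (fun i => G.terms i (σ i)),
      G.signedMonomial (∑ i, p i) := by
    simp only [permProdU, dispMatU_eq_sum_terms]
    rw [Finset.prod_univ_sum (fun i => G.terms i (σ i)) fun _ t => G.signedMonomial t]
    simp only [prod_signedMonomial]
  rw [hexpand, map_sum]
  simp only [coeffHom_signedMonomial, Finset.sum_ite, Finset.sum_const_zero, add_zero,
    Finset.sum_const, nsmul_eq_mul, realizers]
  ring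

def edgeRel (μ : G.VarIdx →₀ ℕ) (u v : Fin n) : Prop :=
  ∃ a ha, μ (G.edgeVar u v a ha) ≠ 0

section Realizers

variable {G} {σ : Equiv.Perm (Fin n)} {r : G.Exponent} {p : Fin n → G.Exponent}

lemma edgeRel_apply_of_mem_realizers (hp : p ∈ G.realizers σ r) {u : Fin n} (hu : σ u ≠ u) :
    G.edgeRel r.2.2 u (σ u) := by
  obtain ⟨hpi, rfl⟩ := Finset.mem_filter.mp hp
  obtain ⟨a, ha, hpu⟩ := G.exists_eq_of_mem_terms (Fintype.mem_piFinset.mp hpi u) (Ne.symm hu)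
  refine ⟨a, ha, ?_⟩
  have hle := Finset.single_le_sum
    (fun i _ => Nat.zero_le ((p i).2.2 (G.edgeVar u (σ u) a ha))) (Finset.mem_univ u)
  rw [hpu, Finsupp.single_eq_same, ← snd_snd_sum_apply] at hle
  omega

lemma eq_or_eq_of_edgeRel (hp : p ∈ G.realizers σ r) {u v : Fin n}
    (h : G.edgeRel r.2.2 u v) : σ u = v ∨ σ v = u := by
  obtain ⟨hpi, rfl⟩ := Finset.mem_filter.mp hp
  obtain ⟨a, ha, hne⟩ := h
  rw [snd_snd_sum_apply] at hne
  obtain ⟨i, -, hi⟩ := Finset.exists_ne_zero_of_sum_ne_zero hne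
  rcases G.eq_and_eq_or_of_mem_terms (Fintype.mem_piFinset.mp hpi i) hi with
    ⟨rfl, rfl⟩ | ⟨rfl, rfl⟩
  · exact .inl rfl
  · exact .inr rfl

lemma sameCycle_iff_eqvGen_edgeRel (hp : p ∈ G.realizers σ r) (u v : Fin n) :
    σ.SameCycle u v ↔ Relation.EqvGen (G.edgeRel r.2.2) u v :=
  Equiv.Perm.sameCycle_iff_eqvGen (fun _ hu => edgeRel_apply_of_mem_realizers hp hu)
    (fun _ _ h => eq_or_eq_of_edgeRel hp h) u v

lemma sign_eq_of_mem_realizers {τ : Equiv.Perm (Fin n)} {q : Fin n → G.Exponent}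
    (hp : p ∈ G.realizers σ r) (hq : q ∈ G.realizers τ r) :
    Equiv.Perm.sign σ = Equiv.Perm.sign τ :=
  Equiv.Perm.sign_eq_of_sameCycle_iff fun u v => by
    rw [sameCycle_iff_eqvGen_edgeRel hp, sameCycle_iff_eqvGen_edgeRel hq]

end Realizers

lemma dispU_eq_sum_sign_smul_permProdU :
    G.dispU = ∑ σ : Equiv.Perm (Fin n), Equiv.Perm.sign σ • G.permProdU σ := by
  rw [dispU, ← Matrix.det_transpose, Matrix.det_apply]
  rfl

lemma fullSupp_permProdU_subset (σ : Equiv.Perm (Fin n)) :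
    fullSupp (G.permProdU σ) ⊆ fullSupp G.dispU := by
  intro r hr
  rw [mem_fullSupp_iff, coeffHom_permProdU] at hr
  obtain ⟨p, hp⟩ : (G.realizers σ r).Nonempty := by
    rw [← Finset.card_ne_zero]; rintro h; simp [h] at hr
  have hterm : ∀ τ, G.coeffHom r (Equiv.Perm.sign τ • G.permProdU τ) =
      Equiv.Perm.sign σ • ((-1) ^ r.2.1 * ((G.realizers τ r).card : ℂ)) := fun τ => by
    refine (map_zsmul_unit (G.coeffHom r) (Equiv.Perm.sign τ) (G.permProdU τ)).trans ?_
    rw [coeffHom_permProdU]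
    obtain h | ⟨q, hq⟩ := (G.realizers τ r).eq_empty_or_nonempty
    · simp [h]
    · rw [sign_eq_of_mem_realizers hq hp]
  have hcard : ∑ τ, (G.realizers τ r).card ≠ 0 :=
    (Finset.sum_pos' (fun _ _ => Nat.zero_le _)
      ⟨σ, Finset.mem_univ σ, Finset.card_pos.mpr ⟨p, hp⟩⟩).ne'
  rw [mem_fullSupp_iff, dispU_eq_sum_sign_smul_permProdU, map_sum,
    Finset.sum_congr rfl fun τ _ => hterm τ, ← Finset.smul_sum, ← Finset.mul_sum,
    smul_ne_zero_iff_ne]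
  exact mul_ne_zero (pow_ne_zero _ (neg_ne_zero.mpr one_ne_zero)) (by exact_mod_cast hcard)

lemma genSupp_permProdU_subset (σ : Equiv.Perm (Fin n)) :
    genSupp (G.permProdU σ) ⊆ genSupp G.dispU := fun p hp => by
  obtain ⟨μ, hμ⟩ := G.mem_genSupp_iff.mp hp
  exact G.mem_genSupp_iff.mpr ⟨μ, G.fullSupp_permProdU_subset σ hμ⟩

def evalHom (x : G.Labeling) : G.LaurentU →+* LaurentC d :=
  AddMonoidAlgebra.mapRingHom _ (MvPolynomial.eval x)

lemma map_dispMatU (x : G.Labeling) (i j : Fin n) :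
    (G.dispMatU i j).map (G.evalHom x) = G.dispMat x i j := by
  by_cases h : i = j <;>
    simp [dispMatU, dispMat, floquetU, floquet, evalHom, Polynomial.map_sum, h]

lemma map_permProdU (x : G.Labeling) (σ : Equiv.Perm (Fin n)) :
    (G.permProdU σ).map (G.evalHom x) = G.permProd x σ := by
  simp only [permProdU, permProd, Polynomial.map_prod, map_dispMatU]

lemma suppC_permProd_subset (x : G.Labeling) (σ : Equiv.Perm (Fin n)) :
    suppC (G.permProd x σ) ⊆ genSupp (G.permProdU σ) := fun p hp h => hp <| by
  rw [← G.map_permProdU, Polynomial.coeff_map, evalHom, AddMonoidAlgebra.coeff_mapRingHom, h,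
    map_zero]

end PeriodicGraph

open PeriodicGraph in
theorem permProd_weight_ge_min_general {d n : ℕ} (G : PeriodicGraph d n)
    (w : (Fin d → ℤ) × ℤ)
    (m : ℤ) (hm : IsLeast (dotZ w '' genSupp G.dispU) m)
    (x : G.Labeling) (σ : Equiv.Perm (Fin n)) :
    ∀ p ∈ suppC (G.permProd x σ), m ≤ dotZ w p := fun p hp =>
  hm.2 ⟨p, G.genSupp_permProdU_subset σ (G.suppC_permProd_subset x σ hp), rfl⟩

open PeriodicGraph in
/-- Let `w ≠ 0` identify a proper face of the generic Newton
polytope `N = N(D(z,λ))` and let `m = min_{a ∈ A(D(z,λ))} w·a`. Then for any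
fixed labeling and any permutation `σ`, every exponent vector in the support
of `σD(z,λ)` has weight at least `m` with respect to `w`. -/
theorem permProd_weight_ge_min {d n : ℕ} (G : PeriodicGraph d n)
    (w : (Fin d → ℤ) × ℤ) (hw : w ≠ 0)
    (hproper : face G.dispU w ≠ newton G.dispU)
    (m : ℤ) (hm : IsLeast (dotZ w '' genSupp G.dispU) m)
    (x : G.Labeling) (σ : Equiv.Perm (Fin n)) :
    ∀ p ∈ suppC (G.permProd x σ), m ≤ dotZ w p :=
  permProd_weight_ge_min_general G w m hm x σ
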